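/- Let H be a complex Hilbert space, let L_s be a bounded self-adjoint operator on H with ⟨x, L_s x⟩ ≤ 0 for all x, let L_a be a bounded skew-adjoint operator on H (L_a* = −L_a), let γ > 0, and set L := L_a + γ L_s. Fix T > 0 and suppose the flow Poincaré inequality holds with constants C₁, C₂ > 0: for every x₀ ∈ ker(L)^⊥, (1/T) ∫₀ᵀ ‖exp(tL)x₀‖² dt ≤ (C₁ + γ² C₂) · (1/T) ∫₀ᵀ ⟨exp(tL)x₀, −L_s exp(tL)x₀⟩ dt. Then for every x₀ ∈ ker(L)^⊥ and every t ≥ 0, (1/T) ∫_t^{t+T} ‖exp(sL)x₀‖² ds ≤ e^{−2νt} ‖x₀‖², where ν = γ / (C₁ + γ² C₂). -/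

import Mathlib

/-!
Along the flow `u s = exp (s • L) x₀` the energy `‖u s‖²` has derivative
`2 Re ⟪u, L u⟫ = 2γ Re ⟪u, L_s u⟫ ≤ 0`, the skew part contributing nothing. Dissipativity of `L`
also gives `ker L ⊆ ker L†`, so `⟪y, u s⟫` is constant for `y ∈ ker L` and the flow preserves
`(ker L)ᗮ`; hence the flow Poincaré inequality applies at every point `u r`.

For the moving average `F r = T⁻¹ ∫_r^{r+T} ‖u‖²` one has
`F' r = T⁻¹ (‖u (r + T)‖² - ‖u r‖²) = -2γ T⁻¹ ∫_0^T ⟪exp (σ • L) (u r), -L_s exp (σ • L) (u r)⟫`,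
and the Poincaré inequality at `u r` turns this into `F' ≤ -2ν F`. Grönwall gives
`F t ≤ e^{-2νt} F 0`, and `F 0 ≤ ‖x₀‖²` because the energy decreases.
-/

theorem Continuous.hasDerivAt_integral_window {f : ℝ → ℝ} (hf : Continuous f) (T r : ℝ) :
    HasDerivAt (fun r => ∫ s in r..r + T, f s) (f (r + T) - f r) r := by
  have hprim (b : ℝ) : HasDerivAt (fun a => ∫ s in (0 : ℝ)..a, f s) (f b) b :=
    (hf.integral_hasStrictDerivAt 0 b).hasDerivAt
  refine (((hprim (r + T)).comp_add_const r T).sub (hprim r)).congr_of_eventuallyEq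
    (Filter.Eventually.of_forall fun a => ?_)
  exact (intervalIntegral.integral_interval_sub_left (hf.intervalIntegrable 0 (a + T))
    (hf.intervalIntegrable 0 a)).symm

theorem le_exp_mul_of_hasDerivAt_le_mul {F F' : ℝ → ℝ} {K : ℝ} (hF : ∀ r, HasDerivAt F (F' r) r)
    (hF' : ∀ r, F' r ≤ K * F r) {t : ℝ} (ht : 0 ≤ t) : F t ≤ Real.exp (K * t) * F 0 := by
  have h := le_gronwallBound_of_liminf_deriv_right_le (ε := 0) (a := 0) (b := t)
    (continuous_iff_continuousAt.2 fun r => (hF r).continuousAt).continuousOn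
    (fun r _ _ hr => (hF r).hasDerivWithinAt.liminf_right_slope_le hr) le_rfl
    (fun r _ => by simpa using hF' r) t ⟨ht, le_rfl⟩
  rwa [gronwallBound_ε0, sub_zero, mul_comm] at h

section Flow

open NormedSpace ContinuousLinearMap

variable {E : Type*} [NormedAddCommGroup E] [NormedSpace ℂ E] [CompleteSpace E]
  (L : E →L[ℂ] E)

theorem hasDerivAt_exp_smul_apply (x : E) (t : ℝ) :
    HasDerivAt (fun s : ℝ => exp (s • L) x) (L (exp (t • L) x)) t :=
  ((apply ℂ E x).restrictScalars ℝ).hasFDerivAt.comp_hasDerivAt t (hasDerivAt_exp_smul_const' L t)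

theorem continuous_exp_smul_apply (x : E) : Continuous fun s : ℝ => exp (s • L) x :=
  continuous_iff_continuousAt.2 fun t => (hasDerivAt_exp_smul_apply L x t).continuousAt

theorem exp_add_smul_apply (s r : ℝ) (x : E) :
    exp ((s + r) • L) x = exp (s • L) (exp (r • L) x) := by
  rw [add_smul, exp_add_of_commute_of_mem_ball (𝕂 := ℂ)
    (((Commute.refl L).smul_left s).smul_right r) (by simp [expSeries_radius_eq_top])
    (by simp [expSeries_radius_eq_top])]
  rfl

theorem integral_comp_exp_smul_apply_add (g : E → ℝ) (x : E) (r T : ℝ) :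
    ∫ s in r..r + T, g (exp (s • L) x) = ∫ σ in (0 : ℝ)..T, g (exp (σ • L) (exp (r • L) x)) := by
  simp only [← exp_add_smul_apply]
  rw [intervalIntegral.integral_comp_add_right (fun s => g (exp (s • L) x)), zero_add, add_comm]

end Flow

section HilbertFlow

open NormedSpace ContinuousLinearMap
open scoped InnerProductSpace InnerProduct

variable {H : Type*} [NormedAddCommGroup H] [InnerProductSpace ℂ H] [CompleteSpace H]
  (L : H →L[ℂ] H)

theorem inner_exp_smul_apply_of_adjoint_apply_eq_zero {y : H} (hy : (L†) y = 0) (x : H) (t : ℝ) :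
    ⟪y, exp (t • L) x⟫_ℂ = ⟪y, x⟫_ℂ := by
  have hderiv (s : ℝ) : HasDerivAt (fun s : ℝ => ⟪y, exp (s • L) x⟫_ℂ) 0 s := by
    have h := (hasDerivAt_const s y).inner ℂ (hasDerivAt_exp_smul_apply L x s)
    rwa [← adjoint_inner_left, hy, inner_zero_left, add_zero] at h
  simpa using is_const_of_deriv_eq_zero (fun s => (hderiv s).differentiableAt)
    (fun s => (hderiv s).deriv) t 0

theorem hasDerivAt_norm_sq_exp_smul_apply (x : H) (t : ℝ) :
    HasDerivAt (fun s : ℝ => ‖exp (s • L) x‖ ^ 2)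
      (2 * (⟪exp (t • L) x, L (exp (t • L) x)⟫_ℂ).re) t := by
  let := InnerProductSpace.complexToReal (G := H)
  simpa [real_inner_eq_re_inner ℂ] using (hasDerivAt_exp_smul_apply L x t).norm_sq

theorem norm_sq_exp_smul_apply_sub_norm_sq (x : H) (T : ℝ) :
    ‖exp (T • L) x‖ ^ 2 - ‖x‖ ^ 2 =
      ∫ σ in (0 : ℝ)..T, 2 * (⟪exp (σ • L) x, L (exp (σ • L) x)⟫_ℂ).re := by
  have hu := continuous_exp_smul_apply L x
  have hcont : Continuous fun σ : ℝ => 2 * (⟪exp (σ • L) x, L (exp (σ • L) x)⟫_ℂ).re := by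
    fun_prop
  simpa using (intervalIntegral.integral_eq_sub_of_hasDerivAt
    (fun σ _ => hasDerivAt_norm_sq_exp_smul_apply L x σ) (hcont.intervalIntegrable 0 T)).symm

section Dissipative

variable {L} (hL : ∀ x, (⟪x, L x⟫_ℂ).re ≤ 0)
include hL

theorem antitone_norm_sq_exp_smul_apply (x : H) : Antitone fun s : ℝ => ‖exp (s • L) x‖ ^ 2 :=
  antitone_of_deriv_nonpos (fun s => (hasDerivAt_norm_sq_exp_smul_apply L x s).differentiableAt)
    fun s => by
      rw [(hasDerivAt_norm_sq_exp_smul_apply L x s).deriv]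
      linarith [hL (exp (s • L) x)]

theorem average_norm_sq_exp_smul_apply_le (x : H) {T : ℝ} (hT : 0 < T) :
    (1 / T) * ∫ s in (0 : ℝ)..T, ‖exp (s • L) x‖ ^ 2 ≤ ‖x‖ ^ 2 := by
  have h : ∫ s in (0 : ℝ)..T, ‖exp (s • L) x‖ ^ 2 ≤ ∫ _ in (0 : ℝ)..T, ‖x‖ ^ 2 :=
    intervalIntegral.integral_mono_on hT.le
      (((continuous_exp_smul_apply L x).norm.pow 2).intervalIntegrable 0 T)
      intervalIntegrable_const fun s hs => by
        simpa using antitone_norm_sq_exp_smul_apply hL x hs.1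
  rw [intervalIntegral.integral_const, smul_eq_mul, sub_zero] at h
  rw [div_mul_eq_mul_div, one_mul, div_le_iff₀ hT]
  linarith

theorem adjoint_apply_eq_zero_of_apply_eq_zero {y : H} (hy : L y = 0) : (L†) y = 0 := by
  set w := (L†) y
  -- `Re ⟪y + τ w, L (y + τ w)⟫ = τ ‖w‖² + τ² Re ⟪w, L w⟫ ≤ 0` for all real `τ` forces `w = 0`.
  have hquad (τ : ℝ) : 0 ≤ -(⟪w, L w⟫_ℂ).re * (τ * τ) + -‖w‖ ^ 2 * τ + 0 := by
    have h := hL (y + (τ : ℂ) • w)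
    have hyw : ⟪y, L w⟫_ℂ = ‖w‖ ^ 2 := by
      rw [← adjoint_inner_left, inner_self_eq_norm_sq_to_K]; norm_cast
    simp only [map_add, map_smul, hy, zero_add, inner_add_left, inner_smul_left, inner_smul_right,
      hyw, Complex.conj_ofReal, Complex.re_ofReal_mul, Complex.add_re] at h
    norm_cast at h
    nlinarith
  simpa [discrim] using discrim_le_zero hquad

theorem exp_smul_apply_mem_orthogonal_ker {x : H}
    (hx : x ∈ (LinearMap.ker (L : H →ₗ[ℂ] H))ᗮ) (t : ℝ) :
    exp (t • L) x ∈ (LinearMap.ker (L : H →ₗ[ℂ] H))ᗮ := by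
  rw [Submodule.mem_orthogonal] at hx ⊢
  intro y hy
  rw [inner_exp_smul_apply_of_adjoint_apply_eq_zero L (adjoint_apply_eq_zero_of_apply_eq_zero hL hy)]
  exact hx y hy

end Dissipative

end HilbertFlow

section DampedGenerator

open NormedSpace ContinuousLinearMap
open scoped InnerProductSpace InnerProduct

variable {H : Type*} [NormedAddCommGroup H] [InnerProductSpace ℂ H] [CompleteSpace H]

def FlowPoincare (L Ls : H →L[ℂ] H) (T C : ℝ) : Prop :=
  ∀ x ∈ (LinearMap.ker (L : H →ₗ[ℂ] H))ᗮ,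
    (1 / T) * ∫ t in (0 : ℝ)..T, ‖exp (t • L) x‖ ^ 2 ≤
      C * ((1 / T) * ∫ t in (0 : ℝ)..T, (⟪exp (t • L) x, -(Ls (exp (t • L) x))⟫_ℂ).re)

theorem re_inner_apply_self_eq_zero_of_adjoint_eq_neg {La : H →L[ℂ] H} (hLa : La† = -La) (x : H) :
    (⟪x, La x⟫_ℂ).re = 0 := by
  have h : ⟪x, La x⟫_ℂ = -⟪La x, x⟫_ℂ := by
    rw [← adjoint_inner_left, hLa, neg_apply, inner_neg_left]
  have h_re := congrArg Complex.re h
  rw [Complex.neg_re, ← inner_conj_symm (La x) x, Complex.conj_re] at h_re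
  linarith

variable {Ls La L : H →L[ℂ] H} {γ : ℝ} (hLa : La† = -La) (hL : L = La + (γ : ℂ) • Ls)
include hLa hL

theorem re_inner_apply_self_eq_neg_mul (x : H) :
    (⟪x, L x⟫_ℂ).re = -γ * (⟪x, -(Ls x)⟫_ℂ).re := by
  rw [hL, add_apply, inner_add_right, Complex.add_re,
    re_inner_apply_self_eq_zero_of_adjoint_eq_neg hLa, smul_apply, inner_smul_right,
    Complex.re_ofReal_mul, inner_neg_right, Complex.neg_re]
  ring

theorem re_inner_apply_self_nonpos (hγ : 0 ≤ γ) (hLs : ∀ x, (⟪x, Ls x⟫_ℂ).re ≤ 0) (x : H) :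
    (⟪x, L x⟫_ℂ).re ≤ 0 := by
  rw [re_inner_apply_self_eq_neg_mul hLa hL, inner_neg_right, Complex.neg_re, mul_neg, neg_mul,
    neg_neg]
  exact mul_nonpos_of_nonneg_of_nonpos hγ (hLs x)

theorem norm_sq_exp_smul_apply_sub_norm_sq_eq_neg_mul (x : H) (T : ℝ) :
    ‖exp (T • L) x‖ ^ 2 - ‖x‖ ^ 2 =
      -(2 * γ) * ∫ σ in (0 : ℝ)..T, (⟪exp (σ • L) x, -(Ls (exp (σ • L) x))⟫_ℂ).re := by
  simp only [norm_sq_exp_smul_apply_sub_norm_sq, re_inner_apply_self_eq_neg_mul hLa hL,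
    ← intervalIntegral.integral_const_mul]
  congr 1 with σ
  ring

theorem window_average_deriv_le (hγ : 0 < γ) (hLs : ∀ x, (⟪x, Ls x⟫_ℂ).re ≤ 0) {T C : ℝ}
    (hC : 0 < C) (hP : FlowPoincare L Ls T C) {x : H}
    (hx : x ∈ (LinearMap.ker (L : H →ₗ[ℂ] H))ᗮ) (r : ℝ) :
    (1 / T) * (‖exp ((r + T) • L) x‖ ^ 2 - ‖exp (r • L) x‖ ^ 2) ≤
      -2 * (γ / C) * ((1 / T) * ∫ s in r..r + T, ‖exp (s • L) x‖ ^ 2) := by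
  have hpoincare := mul_le_mul_of_nonneg_left
    (hP _ (exp_smul_apply_mem_orthogonal_ker (re_inner_apply_self_nonpos hLa hL hγ.le hLs) hx r))
    (div_nonneg hγ.le hC.le)
  rw [← mul_assoc (γ / C) C, div_mul_cancel₀ γ hC.ne'] at hpoincare
  rw [integral_comp_exp_smul_apply_add L (‖·‖ ^ 2), add_comm r T, exp_add_smul_apply,
    norm_sq_exp_smul_apply_sub_norm_sq_eq_neg_mul hLa hL]
  linarith

end DampedGenerator

theorem time_average_decay_of_flow_poincare_general
    {H : Type*} [NormedAddCommGroup H] [InnerProductSpace ℂ H] [CompleteSpace H]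
    (Ls La : H →L[ℂ] H)
    (hLs_neg : ∀ x : H, (inner ℂ x (Ls x) : ℂ).re ≤ 0)
    (hLa_skew : ContinuousLinearMap.adjoint La = -La)
    (γ : ℝ) (hγ : 0 < γ)
    (L : H →L[ℂ] H) (hL : L = La + (γ : ℂ) • Ls)
    (T : ℝ) (hT : 0 < T)
    (C₁ C₂ : ℝ) (hC₁ : 0 < C₁) (hC₂ : 0 < C₂)
    (hflow : ∀ x₀ ∈ (LinearMap.ker (L : H →ₗ[ℂ] H) : Submodule ℂ H)ᗮ,
      (1 / T) * ∫ t in (0 : ℝ)..T, ‖NormedSpace.exp (t • L) x₀‖ ^ 2 ≤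
        (C₁ + γ ^ 2 * C₂) * ((1 / T) * ∫ t in (0 : ℝ)..T,
          (inner ℂ (NormedSpace.exp (t • L) x₀)
            (-(Ls (NormedSpace.exp (t • L) x₀))) : ℂ).re)) :
    ∀ x₀ ∈ (LinearMap.ker (L : H →ₗ[ℂ] H) : Submodule ℂ H)ᗮ, ∀ t : ℝ, 0 ≤ t →
      (1 / T) * ∫ s in t..(t + T), ‖NormedSpace.exp (s • L) x₀‖ ^ 2 ≤
        Real.exp (-2 * (γ / (C₁ + γ ^ 2 * C₂)) * t) * ‖x₀‖ ^ 2 := by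
  intro x₀ hx₀ t ht
  have hf : Continuous fun s : ℝ => ‖NormedSpace.exp (s • L) x₀‖ ^ 2 :=
    (continuous_exp_smul_apply L x₀).norm.pow 2
  calc (1 / T) * ∫ s in t..t + T, ‖NormedSpace.exp (s • L) x₀‖ ^ 2
      ≤ Real.exp (-2 * (γ / (C₁ + γ ^ 2 * C₂)) * t) *
          ((1 / T) * ∫ s in (0 : ℝ)..0 + T, ‖NormedSpace.exp (s • L) x₀‖ ^ 2) :=
        le_exp_mul_of_hasDerivAt_le_mul (fun r => (hf.hasDerivAt_integral_window T r).const_mul _)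
          (window_average_deriv_le hLa_skew hL hγ hLs_neg (by positivity) hflow hx₀) ht
    _ ≤ Real.exp (-2 * (γ / (C₁ + γ ^ 2 * C₂)) * t) * ‖x₀‖ ^ 2 := by
        rw [zero_add]
        gcongr
        exact average_norm_sq_exp_smul_apply_le
          (re_inner_apply_self_nonpos hLa_skew hL hγ.le hLs_neg) x₀ hT

/-- Suppose `L = L_a + γ L_s` with `L_s` self-adjoint negative semidefinite and
`L_a` skew-adjoint, and suppose the flow Poincaré inequality holds on `[0, T]` with constants
`C₁, C₂ > 0`.  Then the moving time-average of `‖exp(sL)x₀‖²` decays exponentially with rate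
`2ν`, where `ν = γ/(C₁ + γ²C₂)`. -/
theorem time_average_decay_of_flow_poincare
    {H : Type*} [NormedAddCommGroup H] [InnerProductSpace ℂ H] [CompleteSpace H]
    (Ls La : H →L[ℂ] H)
    (hLs_sa : IsSelfAdjoint Ls)
    (hLs_neg : ∀ x : H, (inner ℂ x (Ls x) : ℂ).re ≤ 0)
    (hLa_skew : ContinuousLinearMap.adjoint La = -La)
    (γ : ℝ) (hγ : 0 < γ)
    (L : H →L[ℂ] H) (hL : L = La + (γ : ℂ) • Ls)
    (T : ℝ) (hT : 0 < T)
    (C₁ C₂ : ℝ) (hC₁ : 0 < C₁) (hC₂ : 0 < C₂)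
    (hflow : ∀ x₀ ∈ (LinearMap.ker (L : H →ₗ[ℂ] H) : Submodule ℂ H)ᗮ,
      (1 / T) * ∫ t in (0 : ℝ)..T, ‖NormedSpace.exp (t • L) x₀‖ ^ 2 ≤
        (C₁ + γ ^ 2 * C₂) * ((1 / T) * ∫ t in (0 : ℝ)..T,
          (inner ℂ (NormedSpace.exp (t • L) x₀)
            (-(Ls (NormedSpace.exp (t • L) x₀))) : ℂ).re)) :
    ∀ x₀ ∈ (LinearMap.ker (L : H →ₗ[ℂ] H) : Submodule ℂ H)ᗮ, ∀ t : ℝ, 0 ≤ t →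
      (1 / T) * ∫ s in t..(t + T), ‖NormedSpace.exp (s • L) x₀‖ ^ 2 ≤
        Real.exp (-2 * (γ / (C₁ + γ ^ 2 * C₂)) * t) * ‖x₀‖ ^ 2 :=
  time_average_decay_of_flow_poincare_general Ls La hLs_neg hLa_skew γ hγ L hL T hT C₁ C₂ hC₁ hC₂
    hflow
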